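/- Let f : ℝ^d → ℝ^m be differentiable with Jacobian of full column rank everywhere, let h(s) = (h_1(s_1),…,h_d(s_d)) be a differentiable invertible element-wise map with everywhere nonzero derivatives, and let P be a d×d permutation matrix. Then for f̃ = f ∘ h^{-1} ∘ P^{-1} and s̃ = P·h(s), the local IMA contrast satisfies c(J_{f̃}(s̃)) = c(J_f(s)), where c(J) := Σ_i log‖J_{:,i}‖ − (1/2)log det(JᵀJ). -/

import Mathlib

open Matrix

open scoped BigOperators

/-- The local IMA contrast of a matrix `J ∈ ℝ^{m×d}`:
`∑ i log‖J_{:,i}‖ − (1/2) log det(JᵀJ)`. -/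
noncomputable def imaContrast {m d : ℕ} (J : Matrix (Fin m) (Fin d) ℝ) : ℝ :=
  (∑ i, Real.log (Real.sqrt (∑ r, (J r i) ^ 2))) -
    (1 / 2) * Real.log (Jᵀ * J).det

/-- The Jacobian matrix of a map `g : ℝ^d → ℝ^m` at a point `s`. -/
noncomputable def jacobianMatrix {d m : ℕ} (g : (Fin d → ℝ) → (Fin m → ℝ))
    (s : Fin d → ℝ) : Matrix (Fin m) (Fin d) ℝ :=
  fun r i => fderiv ℝ g s (Pi.single i 1) r

/-! By the chain rule, the Jacobian of `f ∘ h⁻¹ ∘ P⁻¹` at `P h(s)` is `J_f(s) · D · P⁻¹`, where `D` is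
the diagonal matrix of the (nonzero) derivatives of the `h_i⁻¹` at `h(s)`. Right multiplication by a
permutation matrix only reorders the columns, and right multiplication by `D = diag(c)` multiplies the
`i`-th column norm by `|c_i|` and `det(JᵀJ)` by `∏ c_i²`, so both terms of the contrast shift by
`∑ log |c_i|`. -/

section Contrast

variable {m d : ℕ}

lemma det_transpose_mul_self_pos {ι κ : Type*} [Fintype ι] [Fintype κ] [DecidableEq κ]
    {A : Matrix ι κ ℝ} (hA : LinearIndependent ℝ A.col) : 0 < (Aᵀ * A).det := by
  simpa using (PosDef.conjTranspose_mul_self A (mulVec_injective_iff.2 hA)).det_pos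

lemma imaContrast_submatrix_equiv (A : Matrix (Fin m) (Fin d) ℝ) (e : Fin d ≃ Fin d) :
    imaContrast (A.submatrix id e) = imaContrast A := by
  have hgram : (A.submatrix id e)ᵀ * A.submatrix id e = (Aᵀ * A).submatrix e e := by
    rw [transpose_submatrix]
    exact (submatrix_mul Aᵀ A e id e Function.bijective_id).symm
  rw [imaContrast, imaContrast, hgram, det_submatrix_equiv_self]
  congr 1
  exact Equiv.sum_comp e fun i => Real.log (Real.sqrt (∑ r, A r i ^ 2))

lemma imaContrast_mul_diagonal {A : Matrix (Fin m) (Fin d) ℝ} (hA : LinearIndependent ℝ A.col)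
    {c : Fin d → ℝ} (hc : ∀ i, c i ≠ 0) :
    imaContrast (A * diagonal c) = imaContrast A := by
  have hcol : ∀ i, Real.log (Real.sqrt (∑ r, (A r i * c i) ^ 2)) =
      Real.log (c i) + Real.log (Real.sqrt (∑ r, A r i ^ 2)) := by
    intro i
    have hsq : ∑ r, A r i ^ 2 ≠ 0 := by
      simpa [dotProduct, sq] using (dotProduct_self_eq_zero (v := A.col i)).not.2 (hA.ne_zero i)
    have hsum : ∑ r, (A r i * c i) ^ 2 = c i ^ 2 * ∑ r, A r i ^ 2 := by
      rw [Finset.mul_sum]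
      exact Finset.sum_congr rfl fun r _ => by ring
    rw [hsum, Real.sqrt_mul (sq_nonneg _), Real.sqrt_sq_eq_abs,
      Real.log_mul (abs_ne_zero.2 (hc i)) (Real.sqrt_ne_zero'.2 (lt_of_le_of_ne
        (Finset.sum_nonneg fun r _ => sq_nonneg _) (Ne.symm hsq))), Real.log_abs]
  have hgram : (A * diagonal c)ᵀ * (A * diagonal c) = diagonal c * (Aᵀ * A) * diagonal c := by
    simp only [transpose_mul, diagonal_transpose, Matrix.mul_assoc]
  have hlogdet : Real.log ((A * diagonal c)ᵀ * (A * diagonal c)).det =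
      2 * ∑ i, Real.log (c i) + Real.log (Aᵀ * A).det := by
    have hprod : ∏ i, c i ≠ 0 := Finset.prod_ne_zero_iff.2 fun i _ => hc i
    rw [hgram, det_mul, det_mul, det_diagonal, mul_comm _ (∏ i, c i), ← mul_assoc, ← sq,
      Real.log_mul (pow_ne_zero 2 hprod) (det_transpose_mul_self_pos hA).ne', Real.log_pow,
      Real.log_prod fun i _ => hc i]
    push_cast
    ring
  simp only [imaContrast, mul_diagonal, hcol, Finset.sum_add_distrib, hlogdet]
  ring

end Contrast

section Jacobian

variable {d m n : ℕ}

lemma jacobianMatrix_eq_toMatrix' (g : (Fin d → ℝ) → Fin m → ℝ) (s : Fin d → ℝ) :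
    jacobianMatrix g s = LinearMap.toMatrix' (fderiv ℝ g s : (Fin d → ℝ) →ₗ[ℝ] Fin m → ℝ) :=
  rfl

lemma jacobianMatrix_comp {g : (Fin n → ℝ) → Fin m → ℝ} {φ : (Fin d → ℝ) → Fin n → ℝ}
    {s : Fin d → ℝ} (hg : DifferentiableAt ℝ g (φ s)) (hφ : DifferentiableAt ℝ φ s) :
    jacobianMatrix (g ∘ φ) s = jacobianMatrix g (φ s) * jacobianMatrix φ s := by
  rw [jacobianMatrix_eq_toMatrix', fderiv_comp s hg hφ, ContinuousLinearMap.toLinearMap_comp,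
    LinearMap.toMatrix'_comp]
  rfl

lemma jacobianMatrix_componentwise {g : Fin d → ℝ → ℝ} {y : Fin d → ℝ}
    (hg : ∀ i, DifferentiableAt ℝ (g i) (y i)) :
    jacobianMatrix (fun x i => g i (x i)) y = diagonal fun i => deriv (g i) (y i) := by
  have hderiv : HasFDerivAt (fun x i => g i (x i))
      (ContinuousLinearMap.pi fun i => deriv (g i) (y i) • ContinuousLinearMap.proj i) y :=
    hasFDerivAt_pi.2 fun i =>
      (hg i).hasDerivAt.comp_hasFDerivAt (𝕜 := ℝ) (f := fun x : Fin d → ℝ => x i) y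
        (hasFDerivAt_apply i y)
  ext r i
  simp [jacobianMatrix, hderiv.fderiv, diagonal_apply, Pi.single_apply]

lemma jacobianMatrix_comp_right (e : Fin n → Fin d) (y : Fin d → ℝ) :
    jacobianMatrix (fun x : Fin d → ℝ => x ∘ e) y =
      (1 : Matrix (Fin d) (Fin d) ℝ).submatrix e id := by
  have hderiv : HasFDerivAt (fun x : Fin d → ℝ => x ∘ e)
      (ContinuousLinearMap.pi fun i => ContinuousLinearMap.proj (R := ℝ) (e i)) y :=
    hasFDerivAt_pi.2 fun i => hasFDerivAt_apply (e i) y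
  ext r i
  simp [jacobianMatrix, hderiv.fderiv, one_apply, Pi.single_apply]

end Jacobian

lemma deriv_ne_zero_of_leftInverse {𝕜 : Type*} [NontriviallyNormedField 𝕜] {g h : 𝕜 → 𝕜} {x : 𝕜}
    (hg : DifferentiableAt 𝕜 g (h x)) (hh : DifferentiableAt 𝕜 h x)
    (hgh : Function.LeftInverse g h) : deriv g (h x) ≠ 0 := by
  have hchain : deriv g (h x) * deriv h x = 1 := by
    rw [← deriv_comp x hg hh, hgh.comp_eq_id, deriv_id]
  exact left_ne_zero_of_mul_eq_one hchain

theorem imaContrast_invariant_elementwise_perm_general {d m : ℕ}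
    (f : (Fin d → ℝ) → (Fin m → ℝ)) (hf : Differentiable ℝ f)
    (hrank : ∀ s : Fin d → ℝ,
      LinearIndependent ℝ (fun i : Fin d => fun r : Fin m => jacobianMatrix f s r i))
    (hfun gfun : Fin d → ℝ → ℝ)
    (hdiffh : ∀ i, Differentiable ℝ (hfun i))
    (hdiffg : ∀ i, Differentiable ℝ (gfun i))
    (hleft : ∀ i, Function.LeftInverse (gfun i) (hfun i))
    (σ : Equiv.Perm (Fin d)) (s : Fin d → ℝ) :
    imaContrast (jacobianMatrix (fun x => f (fun i => gfun i (x (σ i))))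
        (fun i => hfun (σ.symm i) (s (σ.symm i)))) =
      imaContrast (jacobianMatrix f s) := by
  set t : Fin d → ℝ := fun i => hfun (σ.symm i) (s (σ.symm i))
  set G : (Fin d → ℝ) → Fin d → ℝ := fun y i => gfun i (y i)
  have ht : t ∘ σ = fun i => hfun i (s i) := by
    ext i
    simp [t]
  have hGt : G (t ∘ σ) = s := by
    ext i
    rw [ht]
    exact hleft i (s i)
  have hc : ∀ i, deriv (gfun i) ((t ∘ σ) i) ≠ 0 := fun i => by
    rw [ht]
    exact deriv_ne_zero_of_leftInverse (hdiffg i _) (hdiffh i _) (hleft i)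
  have hG : DifferentiableAt ℝ G (t ∘ σ) := by fun_prop
  have hJ : jacobianMatrix (fun x => f (fun i => gfun i (x (σ i)))) t =
      jacobianMatrix f s * diagonal (fun i => deriv (gfun i) ((t ∘ σ) i)) *
        (1 : Matrix (Fin d) (Fin d) ℝ).submatrix σ id := by
    change jacobianMatrix ((f ∘ G) ∘ fun x => x ∘ σ) t = _
    rw [jacobianMatrix_comp ((hf _).comp _ hG) (by fun_prop), jacobianMatrix_comp (hf _) hG, hGt,
      jacobianMatrix_componentwise fun i => hdiffg i _, jacobianMatrix_comp_right]
  rw [hJ, mul_submatrix_one, Function.comp_id, imaContrast_submatrix_equiv]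
  exact imaContrast_mul_diagonal (hrank s) hc

theorem imaContrast_invariant_elementwise_perm {d m : ℕ}
    (f : (Fin d → ℝ) → (Fin m → ℝ)) (hf : Differentiable ℝ f)
    (hrank : ∀ s : Fin d → ℝ,
      LinearIndependent ℝ (fun i : Fin d => fun r : Fin m => jacobianMatrix f s r i))
    (hfun gfun : Fin d → ℝ → ℝ)
    (hdiffh : ∀ i, Differentiable ℝ (hfun i))
    (hdiffg : ∀ i, Differentiable ℝ (gfun i))
    (hderiv : ∀ i x, deriv (hfun i) x ≠ 0)
    (hleft : ∀ i, Function.LeftInverse (gfun i) (hfun i))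
    (hright : ∀ i, Function.RightInverse (gfun i) (hfun i))
    (σ : Equiv.Perm (Fin d)) (s : Fin d → ℝ) :
    imaContrast (jacobianMatrix (fun x => f (fun i => gfun i (x (σ i))))
        (fun i => hfun (σ.symm i) (s (σ.symm i)))) =
      imaContrast (jacobianMatrix f s) :=
  imaContrast_invariant_elementwise_perm_general f hf hrank hfun gfun hdiffh hdiffg hleft σ s
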